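/- arXiv:1909.11769 — 2 statements merged into one kernel-verified Lean document; each statement's English description precedes it below -/
import Mathlib

section
/- The function d(X,Y) = (1 - m(X,Y)m(Y,X))/(1 + m(X,Y)m(Y,X)) defines a metric on the set 𝕊_D of D×D positive semi-definite trace-one matrices, with the convention that products of sups are interpreted via m taking values in [0,1]. -/
/-!
The supremum defining `m(X,Y)` is attained, because the positive semidefinite cone is closed, so
`m(X,Y) • Y ≤ X` in the Loewner order. Chaining `m(X,Y) • Y ≤ X` with `m(Y,Z) • Z ≤ Y` makes `m`
supermultiplicative, `m(X,Y) m(Y,Z) ≤ m(X,Z)`, and taking traces gives `m ≤ 1`. Hence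
`t(X,Y) = m(X,Y) m(Y,X)` lies in `[0,1]`, equals `1` only if `Y ≤ X ≤ Y`, and satisfies
`t(X,Y) t(Y,Z) ≤ t(X,Z)`. Since `d = f ∘ t` with `f t = (1 - t)/(1 + t)`, the triangle inequality
follows from two properties of `f` on `[0,1]`: it is antitone and `f (s t) ≤ f s + f t`.
-/

open Matrix
open scoped ComplexOrder

/-- `m(X,Y) = sup {λ : X - λY ⪰ 0}`. -/
noncomputable def mfun {D : ℕ} (X Y : Matrix (Fin D) (Fin D) ℂ) : ℝ :=
  sSup {l : ℝ | (X - l • Y).PosSemidef}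

/-- The projective metric `d(X,Y) = (1 - m(X,Y)m(Y,X))/(1 + m(X,Y)m(Y,X))`. -/
noncomputable def dfun {D : ℕ} (X Y : Matrix (Fin D) (Fin D) ℂ) : ℝ :=
  (1 - mfun X Y * mfun Y X) / (1 + mfun X Y * mfun Y X)

namespace Matrix

variable {n 𝕜 : Type*} [RCLike 𝕜]

theorem isClosed_setOf_posSemidef : IsClosed {M : Matrix n n 𝕜 | M.PosSemidef} := by
  simp only [PosSemidef, IsHermitian, Set.ofPred_and, Set.ofPred_forall]
  refine (isClosed_eq continuous_id.matrix_conjTranspose continuous_id).inter ?_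
  refine isClosed_iInter fun x => isClosed_le continuous_const ?_
  exact continuous_finsetSum _ fun i _ => continuous_finsetSum _ fun j _ => by fun_prop

theorem PosSemidef.sub_smul_trans {X Y Z : Matrix n n 𝕜} {a b : ℝ} (ha : 0 ≤ a)
    (hXY : (X - a • Y).PosSemidef) (hYZ : (Y - b • Z).PosSemidef) :
    (X - (a * b) • Z).PosSemidef := by
  have := hXY.add (hYZ.smul ha)
  rwa [smul_sub, smul_smul, sub_add_sub_cancel] at this

open scoped MatrixOrder in
theorem eq_of_posSemidef_sub_of_posSemidef_sub {X Y : Matrix n n 𝕜} (hXY : (X - Y).PosSemidef)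
    (hYX : (Y - X).PosSemidef) : X = Y :=
  le_antisymm hYX hXY

theorem le_one_of_posSemidef_sub_smul [Fintype n] {X Y : Matrix n n 𝕜} {l : ℝ}
    (hX : X.trace = 1) (hY : Y.trace = 1) (h : (X - l • Y).PosSemidef) : l ≤ 1 := by
  have := h.trace_nonneg
  rw [trace_sub, trace_smul, hX, hY, RCLike.real_smul_eq_coe_mul, mul_one,
    ← RCLike.ofReal_one, ← RCLike.ofReal_sub, RCLike.ofReal_nonneg] at this
  linarith

end Matrix

theorem one_sub_div_one_add_antitoneOn :
    AntitoneOn (fun t : ℝ => (1 - t) / (1 + t)) (Set.Ici 0) := by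
  intro s hs t ht hst
  simp only [Set.mem_Ici] at hs ht
  rw [div_le_div_iff₀ (by linarith) (by linarith)]
  nlinarith

theorem one_sub_mul_div_one_add_mul_le {s t : ℝ} (hs₀ : 0 ≤ s) (ht₀ : 0 ≤ t) (hs₁ : s ≤ 1)
    (ht₁ : t ≤ 1) :
    (1 - s * t) / (1 + s * t) ≤ (1 - s) / (1 + s) + (1 - t) / (1 + t) := by
  rw [div_add_div _ _ (by linarith) (by linarith), div_le_div_iff₀ (by positivity) (by positivity)]
  -- the two sides differ by `(1 - s) (1 - t) (1 - s t)`
  nlinarith [mul_nonneg (mul_nonneg (sub_nonneg.2 hs₁) (sub_nonneg.2 ht₁))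
    (sub_nonneg.2 (mul_le_one₀ hs₁ ht₀ ht₁))]

section mfun

variable {D : ℕ} {X Y Z : Matrix (Fin D) (Fin D) ℂ}

theorem bddAbove_setOf_posSemidef_sub_smul (hXt : X.trace = 1) (hYt : Y.trace = 1) :
    BddAbove {l : ℝ | (X - l • Y).PosSemidef} :=
  ⟨1, fun _ => le_one_of_posSemidef_sub_smul hXt hYt⟩

theorem zero_mem_setOf_posSemidef_sub_smul (hX : X.PosSemidef) :
    (0 : ℝ) ∈ {l : ℝ | (X - l • Y).PosSemidef} := by
  simpa using hX

theorem mfun_nonneg (hX : X.PosSemidef) (hXt : X.trace = 1) (hYt : Y.trace = 1) :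
    0 ≤ mfun X Y :=
  le_csSup (bddAbove_setOf_posSemidef_sub_smul hXt hYt) (zero_mem_setOf_posSemidef_sub_smul hX)

theorem mfun_le_one (hX : X.PosSemidef) (hXt : X.trace = 1) (hYt : Y.trace = 1) :
    mfun X Y ≤ 1 :=
  csSup_le ⟨0, zero_mem_setOf_posSemidef_sub_smul hX⟩ fun _ =>
    le_one_of_posSemidef_sub_smul hXt hYt

theorem posSemidef_sub_mfun_smul (hX : X.PosSemidef) (hXt : X.trace = 1) (hYt : Y.trace = 1) :
    (X - mfun X Y • Y).PosSemidef :=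
  IsClosed.csSup_mem
    (isClosed_setOf_posSemidef.preimage <|
      continuous_const.sub (continuous_id.smul continuous_const))
    ⟨0, zero_mem_setOf_posSemidef_sub_smul hX⟩ (bddAbove_setOf_posSemidef_sub_smul hXt hYt)

theorem mfun_self (hX : X.PosSemidef) (hXt : X.trace = 1) : mfun X X = 1 :=
  (mfun_le_one hX hXt hXt).antisymm <|
    le_csSup (bddAbove_setOf_posSemidef_sub_smul hXt hXt) (by simpa using PosSemidef.zero)

theorem mfun_mul_mfun_le (hX : X.PosSemidef) (hY : Y.PosSemidef) (hXt : X.trace = 1)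
    (hYt : Y.trace = 1) (hZt : Z.trace = 1) :
    mfun X Y * mfun Y Z ≤ mfun X Z :=
  le_csSup (bddAbove_setOf_posSemidef_sub_smul hXt hZt) <|
    (posSemidef_sub_mfun_smul hX hXt hYt).sub_smul_trans (mfun_nonneg hX hXt hYt)
      (posSemidef_sub_mfun_smul hY hYt hZt)

theorem mfun_mul_mfun_swap_le_one (hX : X.PosSemidef) (hY : Y.PosSemidef) (hXt : X.trace = 1)
    (hYt : Y.trace = 1) :
    mfun X Y * mfun Y X ≤ 1 :=
  mfun_self hX hXt ▸ mfun_mul_mfun_le hX hY hXt hYt hXt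

theorem eq_of_mfun_mul_mfun_swap_eq_one (hX : X.PosSemidef) (hY : Y.PosSemidef)
    (hXt : X.trace = 1) (hYt : Y.trace = 1) (h : mfun X Y * mfun Y X = 1) : X = Y := by
  have hXY : mfun X Y = 1 := by
    nlinarith [mfun_le_one hX hXt hYt, mfun_le_one hY hYt hXt, mfun_nonneg hX hXt hYt]
  have hYX : mfun Y X = 1 := by rwa [hXY, one_mul] at h
  have h₁ := posSemidef_sub_mfun_smul hX hXt hYt
  have h₂ := posSemidef_sub_mfun_smul hY hYt hXt
  rw [hXY, one_smul] at h₁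
  rw [hYX, one_smul] at h₂
  exact eq_of_posSemidef_sub_of_posSemidef_sub h₁ h₂

end mfun

section dfun

variable {D : ℕ} {X Y Z : Matrix (Fin D) (Fin D) ℂ}

theorem dfun_comm (X Y : Matrix (Fin D) (Fin D) ℂ) : dfun X Y = dfun Y X := by
  rw [dfun, dfun, mul_comm]

theorem dfun_nonneg (hX : X.PosSemidef) (hY : Y.PosSemidef) (hXt : X.trace = 1)
    (hYt : Y.trace = 1) : 0 ≤ dfun X Y :=
  div_nonneg (sub_nonneg.2 (mfun_mul_mfun_swap_le_one hX hY hXt hYt)) <| by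
    have := mul_nonneg (mfun_nonneg hX hXt hYt) (mfun_nonneg hY hYt hXt); linarith

theorem dfun_eq_zero_iff (hX : X.PosSemidef) (hY : Y.PosSemidef) (hXt : X.trace = 1)
    (hYt : Y.trace = 1) : dfun X Y = 0 ↔ X = Y := by
  refine ⟨fun h => eq_of_mfun_mul_mfun_swap_eq_one hX hY hXt hYt ?_, ?_⟩
  · have := mul_nonneg (mfun_nonneg hX hXt hYt) (mfun_nonneg hY hYt hXt)
    rw [dfun, div_eq_zero_iff] at h
    rcases h with h | h <;> linarith
  · rintro rfl
    simp [dfun, mfun_self hX hXt]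

theorem mfun_mul_mfun_swap_mul_le (hX : X.PosSemidef) (hY : Y.PosSemidef) (hZ : Z.PosSemidef)
    (hXt : X.trace = 1) (hYt : Y.trace = 1) (hZt : Z.trace = 1) :
    mfun X Y * mfun Y X * (mfun Y Z * mfun Z Y) ≤ mfun X Z * mfun Z X :=
  calc mfun X Y * mfun Y X * (mfun Y Z * mfun Z Y)
      = mfun X Y * mfun Y Z * (mfun Z Y * mfun Y X) := by ring
    _ ≤ mfun X Z * mfun Z X :=
      mul_le_mul (mfun_mul_mfun_le hX hY hXt hYt hZt) (mfun_mul_mfun_le hZ hY hZt hYt hXt)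
        (mul_nonneg (mfun_nonneg hZ hZt hYt) (mfun_nonneg hY hYt hXt))
        (mfun_nonneg hX hXt hZt)

theorem dfun_triangle (hX : X.PosSemidef) (hY : Y.PosSemidef) (hZ : Z.PosSemidef)
    (hXt : X.trace = 1) (hYt : Y.trace = 1) (hZt : Z.trace = 1) :
    dfun X Z ≤ dfun X Y + dfun Y Z := by
  have hs₀ := mul_nonneg (mfun_nonneg hX hXt hYt) (mfun_nonneg hY hYt hXt)
  have ht₀ := mul_nonneg (mfun_nonneg hY hYt hZt) (mfun_nonneg hZ hZt hYt)
  calc dfun X Z ≤ (1 - mfun X Y * mfun Y X * (mfun Y Z * mfun Z Y))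
        / (1 + mfun X Y * mfun Y X * (mfun Y Z * mfun Z Y)) :=
      one_sub_div_one_add_antitoneOn (Set.mem_Ici.2 (mul_nonneg hs₀ ht₀))
        (Set.mem_Ici.2 (mul_nonneg (mfun_nonneg hX hXt hZt) (mfun_nonneg hZ hZt hXt)))
        (mfun_mul_mfun_swap_mul_le hX hY hZ hXt hYt hZt)
    _ ≤ dfun X Y + dfun Y Z :=
      one_sub_mul_div_one_add_mul_le hs₀ ht₀ (mfun_mul_mfun_swap_le_one hX hY hXt hYt)
        (mfun_mul_mfun_swap_le_one hY hZ hYt hZt)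

end dfun

theorem stmt5 {D : ℕ} :
    (∀ X Y : Matrix (Fin D) (Fin D) ℂ, X.PosSemidef → Y.PosSemidef →
      X.trace = 1 → Y.trace = 1 → dfun X Y = dfun Y X) ∧
    (∀ X Y : Matrix (Fin D) (Fin D) ℂ, X.PosSemidef → Y.PosSemidef →
      X.trace = 1 → Y.trace = 1 → 0 ≤ dfun X Y) ∧
    (∀ X Y : Matrix (Fin D) (Fin D) ℂ, X.PosSemidef → Y.PosSemidef →
      X.trace = 1 → Y.trace = 1 → (dfun X Y = 0 ↔ X = Y)) ∧
    (∀ X Y Z : Matrix (Fin D) (Fin D) ℂ, X.PosSemidef → Y.PosSemidef → Z.PosSemidef →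
      X.trace = 1 → Y.trace = 1 → Z.trace = 1 →
      dfun X Z ≤ dfun X Y + dfun Y Z) :=
  ⟨fun X Y _ _ _ _ => dfun_comm X Y, fun _ _ => dfun_nonneg, fun _ _ => dfun_eq_zero_iff,
    fun _ _ _ => dfun_triangle⟩
end

section
/- For a positive linear map φ on D×D matrices with ker φ ∩ P_D = {0} and ker φ* ∩ P_D = {0}, the contraction coefficients of φ and its Hilbert–Schmidt adjoint coincide: c(φ) = c(φ*). -/
open Matrix
open scoped ComplexOrder

/-- The projective action `φ·X = φ(X)/tr(φ(X))`. -/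
noncomputable def projAct {D : ℕ}
    (φ : Matrix (Fin D) (Fin D) ℂ →ₗ[ℂ] Matrix (Fin D) (Fin D) ℂ)
    (X : Matrix (Fin D) (Fin D) ℂ) : Matrix (Fin D) (Fin D) ℂ :=
  ((φ X).trace)⁻¹ • φ X

/-- The contraction coefficient `c(φ) = sup {d(φ·X, φ·Y) : X, Y ∈ 𝕊_D}`. -/
noncomputable def contr {D : ℕ}
    (φ : Matrix (Fin D) (Fin D) ℂ →ₗ[ℂ] Matrix (Fin D) (Fin D) ℂ) : ℝ :=
  sSup {r : ℝ | ∃ X Y : Matrix (Fin D) (Fin D) ℂ, X.PosSemidef ∧ X.trace = 1 ∧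
    Y.PosSemidef ∧ Y.trace = 1 ∧ r = dfun (projAct φ X) (projAct φ Y)}

/-!
Fix states `X, Y` and write `m = m(φX, φY)`, `m' = m(φY, φX)`. Failure of `φX - (m + ε) φY ⪰ 0`
yields a vector `v` with `⟨v, φX v⟩ < (m + ε) ⟨v, φY v⟩`, and likewise a vector `w` with
`⟨w, φY w⟩ < (m' + ε) ⟨w, φX w⟩`. For `P = v v*` and `Q = w w*`, testing `φ* P - λ φ* Q ⪰ 0`
against `X` (and the reverse against `Y`) and moving `φ*` across the trace,
`tr (X φ* P) = ⟨v, φX v⟩`, gives `m(φ*P, φ*Q) m(φ*Q, φ*P) ≤ (m + ε)(m' + ε)`.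
As `d = (1 - p)/(1 + p)` is decreasing in the product `p` and blind to positive rescaling of
its arguments, letting `ε → 0` gives `d(φ·X, φ·Y) ≤ c(φ*)`; hence `c(φ) ≤ c(φ*)`. Since `φ*` is
positive by duality (`⟨x, φ*M x⟩ = tr (M φ(x x*))`), the same argument applies to `(φ*, φ)`.
-/

namespace Matrix

theorem posSemidef_smul_iff {n : Type*} {A : Matrix n n ℂ} {a : ℝ} (ha : 0 < a) :
    (a • A).PosSemidef ↔ A.PosSemidef := by
  refine ⟨fun h => ?_, fun h => h.smul ha.le⟩
  simpa [smul_smul, ha.ne'] using h.smul (inv_pos.mpr ha).le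

variable {n : Type*} [Fintype n]

theorem trace_mul_vecMulVec_star (X : Matrix n n ℂ) (v : n → ℂ) :
    (X * vecMulVec v (star v)).trace = star v ⬝ᵥ X *ᵥ v := by
  rw [mul_vecMulVec, trace_vecMulVec, dotProduct_comm]

theorem PosSemidef.trace_mul_nonneg {X W : Matrix n n ℂ} (hX : X.PosSemidef)
    (hW : W.PosSemidef) : 0 ≤ (X * W).trace := by
  obtain ⟨m, v, rfl⟩ := posSemidef_iff_eq_sum_vecMulVec.mp hW
  simp only [Matrix.mul_sum, trace_sum, trace_mul_vecMulVec_star]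
  exact Finset.sum_nonneg fun i _ => hX.dotProduct_mulVec_nonneg (v i)

theorem posSemidef_of_forall_dotProduct_mulVec_nonneg {A : Matrix n n ℂ}
    (h : ∀ x, 0 ≤ star x ⬝ᵥ A *ᵥ x) : A.PosSemidef := by
  classical
  rw [← isPositive_toEuclideanLin_iff, LinearMap.isPositive_iff_complex]
  intro x
  rw [← inner_conj_symm, EuclideanSpace.inner_eq_star_dotProduct, toLpLin_apply,
    WithLp.ofLp_toLp, dotProduct_comm]
  obtain ⟨hre, him⟩ := Complex.nonneg_iff.mp (h x.ofLp)
  have hreal : ((star x.ofLp ⬝ᵥ A *ᵥ x.ofLp).re : ℂ) = star x.ofLp ⬝ᵥ A *ᵥ x.ofLp :=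
    Complex.ext rfl (by simp [← him])
  rw [Complex.conj_eq_iff_re.mpr hreal]
  exact ⟨hreal, hre⟩

theorem PosSemidef.trace_eq_ofReal_re {A : Matrix n n ℂ} (hA : A.PosSemidef) :
    A.trace = (A.trace.re : ℂ) :=
  Complex.eq_re_of_ofReal_le (r := 0) (by simpa using hA.trace_nonneg)

theorem PosSemidef.re_trace_pos {A : Matrix n n ℂ} (hA : A.PosSemidef) (hA0 : A ≠ 0) :
    0 < A.trace.re :=
  (Complex.pos_iff.mp (hA.trace_nonneg.lt_of_ne' (mt hA.trace_eq_zero_iff.mp hA0))).1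

theorem PosSemidef.trace_inv_re_trace_smul {A : Matrix n n ℂ} (hA : A.PosSemidef)
    (hA0 : A ≠ 0) : ((A.trace.re)⁻¹ • A).trace = 1 := by
  rw [trace_smul, hA.trace_eq_ofReal_re, Complex.real_smul, Complex.ofReal_re,
    ← Complex.ofReal_mul, inv_mul_cancel₀ (hA.re_trace_pos hA0).ne', Complex.ofReal_one]

theorem le_div_of_posSemidef_sub_smul {A B X : Matrix n n ℂ} (hX : X.PosSemidef) {l : ℝ}
    (hl : (A - l • B).PosSemidef) (hXB : 0 < (X * B).trace.re) :
    l ≤ (X * A).trace.re / (X * B).trace.re := by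
  have h := (Complex.nonneg_iff.mp (hX.trace_mul_nonneg hl)).1
  rw [Matrix.mul_sub, trace_sub, Matrix.mul_smul, trace_smul, Complex.sub_re, Complex.smul_re,
    smul_eq_mul, sub_nonneg] at h
  rwa [le_div_iff₀ hXB]

theorem bddAbove_posSemidef_sub_smul [DecidableEq n] (A : Matrix n n ℂ) {B : Matrix n n ℂ}
    (hB : B.PosSemidef) (hB0 : B ≠ 0) : BddAbove {l : ℝ | (A - l • B).PosSemidef} :=
  ⟨_, fun _ hl => le_div_of_posSemidef_sub_smul PosSemidef.one hl
    (by simpa using hB.re_trace_pos hB0)⟩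

end Matrix

theorem one_sub_div_one_add_le {p q : ℝ} (hp : 0 ≤ p) (hpq : p ≤ q) :
    (1 - q) / (1 + q) ≤ (1 - p) / (1 + p) := by
  rw [div_le_div_iff₀ (by linarith) (by linarith)]
  nlinarith

section ProjectiveMetric
variable {D : ℕ} {A B : Matrix (Fin D) (Fin D) ℂ}

theorem mfun_nonneg_s17 (hA : A.PosSemidef) (hB : B.PosSemidef) (hB0 : B ≠ 0) : 0 ≤ mfun A B :=
  le_csSup (bddAbove_posSemidef_sub_smul A hB hB0) (by simpa using hA)

theorem mfun_le_div (hA : A.PosSemidef) {X : Matrix (Fin D) (Fin D) ℂ} (hX : X.PosSemidef)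
    (hXB : 0 < (X * B).trace.re) : mfun A B ≤ (X * A).trace.re / (X * B).trace.re :=
  csSup_le ⟨0, by simpa using hA⟩ fun _ hl => le_div_of_posSemidef_sub_smul hX hl hXB

theorem mfun_mul_mfun_le_one (hA : A.PosSemidef) (hA0 : A ≠ 0) (hB : B.PosSemidef)
    (hB0 : B ≠ 0) : mfun A B * mfun B A ≤ 1 := by
  have htrA := hA.re_trace_pos hA0
  have htrB := hB.re_trace_pos hB0
  have hAB := mfun_le_div hA PosSemidef.one (B := B) (by simpa using htrB)
  have hBA := mfun_le_div hB PosSemidef.one (B := A) (by simpa using htrA)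
  simp only [Matrix.one_mul] at hAB hBA
  calc mfun A B * mfun B A ≤ (A.trace.re / B.trace.re) * (B.trace.re / A.trace.re) :=
        mul_le_mul hAB hBA (mfun_nonneg_s17 hB hA hA0) (by positivity)
    _ = 1 := by field_simp

theorem exists_dotProduct_mulVec_lt_mfun_add (hA : A.PosSemidef) (hB : B.PosSemidef)
    (hB0 : B ≠ 0) {ε : ℝ} (hε : 0 < ε) :
    ∃ v, 0 < (star v ⬝ᵥ B *ᵥ v).re ∧
      (star v ⬝ᵥ A *ᵥ v).re < (mfun A B + ε) * (star v ⬝ᵥ B *ᵥ v).re := by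
  have hnot : ¬ (A - (mfun A B + ε) • B).PosSemidef := fun h =>
    (lt_add_of_pos_right _ hε).not_ge (le_csSup (bddAbove_posSemidef_sub_smul A hB hB0) h)
  have hherm : (A - (mfun A B + ε) • B).IsHermitian :=
    hA.isHermitian.sub (hB.isHermitian.smul (IsSelfAdjoint.all _))
  obtain ⟨v, hv⟩ : ∃ v, ¬ 0 ≤ star v ⬝ᵥ (A - (mfun A B + ε) • B) *ᵥ v := by
    by_contra! h
    exact hnot (.of_dotProduct_mulVec_nonneg hherm h)
  have hneg : (star v ⬝ᵥ (A - (mfun A B + ε) • B) *ᵥ v).re < 0 :=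
    (Complex.not_le_iff.mp hv).resolve_right
      (by simpa using (hherm.im_star_dotProduct_mulVec_self v).symm)
  rw [sub_mulVec, dotProduct_sub, smul_mulVec, dotProduct_smul, Complex.sub_re, Complex.smul_re,
    smul_eq_mul, sub_neg] at hneg
  have hquadA := (Complex.nonneg_iff.mp (hA.dotProduct_mulVec_nonneg v)).1
  have hm := mfun_nonneg_s17 hA hB hB0
  exact ⟨v, pos_of_mul_pos_right (hquadA.trans_lt hneg) (by positivity), hneg⟩

open scoped Pointwise in
theorem mfun_smul_smul {a b : ℝ} (ha : 0 < a) (hb : 0 < b) (A B : Matrix (Fin D) (Fin D) ℂ) :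
    mfun (a • A) (b • B) = a / b * mfun A B := by
  have hset : {l : ℝ | (a • A - l • b • B).PosSemidef} =
      (a / b) • {l : ℝ | (A - l • B).PosSemidef} := by
    ext l
    have hmat : a • A - l • b • B = a • (A - ((a / b)⁻¹ • l) • B) := by
      rw [smul_sub, smul_smul, smul_smul, smul_eq_mul]
      congr 2
      field_simp
    rw [Set.mem_smul_set_iff_inv_smul_mem₀ (by positivity), Set.mem_ofPred_eq,
      Set.mem_ofPred_eq, hmat, posSemidef_smul_iff ha]
  rw [mfun, mfun, hset, Real.sSup_smul_of_nonneg (by positivity), smul_eq_mul]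

theorem dfun_smul_smul {a b : ℝ} (ha : 0 < a) (hb : 0 < b) (A B : Matrix (Fin D) (Fin D) ℂ) :
    dfun (a • A) (b • B) = dfun A B := by
  have h : a / b * mfun A B * (b / a * mfun B A) = mfun A B * mfun B A := by
    field_simp
  rw [dfun, dfun, mfun_smul_smul ha hb, mfun_smul_smul hb ha, h]

theorem dfun_nonneg_s17 (hA : A.PosSemidef) (hA0 : A ≠ 0) (hB : B.PosSemidef) (hB0 : B ≠ 0) :
    0 ≤ dfun A B := by
  have := mfun_nonneg_s17 hA hB hB0
  have := mfun_nonneg_s17 hB hA hA0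
  exact div_nonneg (sub_nonneg.mpr (mfun_mul_mfun_le_one hA hA0 hB hB0)) (by positivity)

theorem dfun_le_one (hA : A.PosSemidef) (hA0 : A ≠ 0) (hB : B.PosSemidef) (hB0 : B ≠ 0) :
    dfun A B ≤ 1 := by
  have hm := mfun_nonneg_s17 hA hB hB0
  have hm' := mfun_nonneg_s17 hB hA hA0
  rw [dfun, div_le_one (by positivity)]
  linarith [mul_nonneg hm hm']

end ProjectiveMetric

def IsHilbertSchmidtAdjoint {n : Type*} [Fintype n] (φ ψ : Matrix n n ℂ →ₗ[ℂ] Matrix n n ℂ) :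
    Prop :=
  ∀ A B, (Aᴴ * φ B).trace = ((ψ A)ᴴ * B).trace

namespace IsHilbertSchmidtAdjoint
variable {n : Type*} [Fintype n] {φ ψ : Matrix n n ℂ →ₗ[ℂ] Matrix n n ℂ}

theorem symm (h : IsHilbertSchmidtAdjoint φ ψ) : IsHilbertSchmidtAdjoint ψ φ := fun A B => by
  simpa [← trace_conjTranspose, conjTranspose_mul] using congrArg star (h B A).symm

theorem posSemidef_map (h : IsHilbertSchmidtAdjoint φ ψ)
    (hφ : ∀ M : Matrix n n ℂ, M.PosSemidef → (φ M).PosSemidef) :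
    ∀ M : Matrix n n ℂ, M.PosSemidef → (ψ M).PosSemidef := fun M hM => by
  refine posSemidef_conjTranspose_iff.mp (posSemidef_of_forall_dotProduct_mulVec_nonneg fun x => ?_)
  rw [← trace_mul_vecMulVec_star, ← h, hM.isHermitian.eq]
  exact hM.trace_mul_nonneg (hφ _ (posSemidef_vecMulVec_self_star x))

theorem trace_mul_map (h : IsHilbertSchmidtAdjoint φ ψ) {Z : Matrix n n ℂ} (hZ : Z.IsHermitian)
    (hψZ : (ψ Z).IsHermitian) (X : Matrix n n ℂ) : (X * ψ Z).trace = (Z * φ X).trace := by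
  rw [trace_mul_comm, ← hψZ.eq, ← h, hZ.eq]

theorem trace_mul_map_vecMulVec (h : IsHilbertSchmidtAdjoint φ ψ)
    (hψ : ∀ M : Matrix n n ℂ, M.PosSemidef → (ψ M).PosSemidef) (X : Matrix n n ℂ) (u : n → ℂ) :
    (X * ψ (vecMulVec u (star u))).trace = star u ⬝ᵥ φ X *ᵥ u := by
  rw [h.trace_mul_map (posSemidef_vecMulVec_self_star u).isHermitian
    (hψ _ (posSemidef_vecMulVec_self_star u)).isHermitian, trace_mul_comm,
    trace_mul_vecMulVec_star]

end IsHilbertSchmidtAdjoint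

section Contraction
variable {D : ℕ} {φ ψ : Matrix (Fin D) (Fin D) ℂ →ₗ[ℂ] Matrix (Fin D) (Fin D) ℂ}

theorem dfun_projAct {X Y : Matrix (Fin D) (Fin D) ℂ} (hX : (φ X).PosSemidef) (hX0 : φ X ≠ 0)
    (hY : (φ Y).PosSemidef) (hY0 : φ Y ≠ 0) :
    dfun (projAct φ X) (projAct φ Y) = dfun (φ X) (φ Y) := by
  rw [projAct, projAct, hX.trace_eq_ofReal_re, hY.trace_eq_ofReal_re, ← Complex.ofReal_inv,
    ← Complex.ofReal_inv, Complex.coe_smul, Complex.coe_smul,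
    dfun_smul_smul (inv_pos.mpr (hX.re_trace_pos hX0)) (inv_pos.mpr (hY.re_trace_pos hY0))]

theorem map_ne_zero_of_trace_eq_one
    (hker : ∀ M : Matrix (Fin D) (Fin D) ℂ, M.PosSemidef → φ M = 0 → M = 0)
    {X : Matrix (Fin D) (Fin D) ℂ} (hX : X.PosSemidef) (hX1 : X.trace = 1) : φ X ≠ 0 :=
  fun h => one_ne_zero (hX1.symm.trans (by rw [hker X hX h, trace_zero]))

theorem dfun_projAct_mem_Icc
    (hpos : ∀ M : Matrix (Fin D) (Fin D) ℂ, M.PosSemidef → (φ M).PosSemidef)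
    (hker : ∀ M : Matrix (Fin D) (Fin D) ℂ, M.PosSemidef → φ M = 0 → M = 0)
    {X Y : Matrix (Fin D) (Fin D) ℂ} (hX : X.PosSemidef) (hX1 : X.trace = 1)
    (hY : Y.PosSemidef) (hY1 : Y.trace = 1) :
    dfun (projAct φ X) (projAct φ Y) ∈ Set.Icc 0 1 := by
  have hX0 := map_ne_zero_of_trace_eq_one hker hX hX1
  have hY0 := map_ne_zero_of_trace_eq_one hker hY hY1
  rw [dfun_projAct (hpos X hX) hX0 (hpos Y hY) hY0]
  exact ⟨dfun_nonneg_s17 (hpos X hX) hX0 (hpos Y hY) hY0, dfun_le_one (hpos X hX) hX0 (hpos Y hY) hY0⟩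

theorem contr_nonneg
    (hpos : ∀ M : Matrix (Fin D) (Fin D) ℂ, M.PosSemidef → (φ M).PosSemidef)
    (hker : ∀ M : Matrix (Fin D) (Fin D) ℂ, M.PosSemidef → φ M = 0 → M = 0) :
    0 ≤ contr φ :=
  Real.sSup_nonneg fun _ ⟨_, _, hX, hX1, hY, hY1, hr⟩ =>
    hr ▸ (dfun_projAct_mem_Icc hpos hker hX hX1 hY hY1).1

theorem dfun_le_contr
    (hpos : ∀ M : Matrix (Fin D) (Fin D) ℂ, M.PosSemidef → (φ M).PosSemidef)
    (hker : ∀ M : Matrix (Fin D) (Fin D) ℂ, M.PosSemidef → φ M = 0 → M = 0)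
    {P Q : Matrix (Fin D) (Fin D) ℂ} (hP : P.PosSemidef) (hP0 : P ≠ 0) (hQ : Q.PosSemidef)
    (hQ0 : Q ≠ 0) : dfun (φ P) (φ Q) ≤ contr φ := by
  have hbdd : BddAbove {r : ℝ | ∃ X Y : Matrix (Fin D) (Fin D) ℂ, X.PosSemidef ∧ X.trace = 1 ∧
      Y.PosSemidef ∧ Y.trace = 1 ∧ r = dfun (projAct φ X) (projAct φ Y)} :=
    ⟨1, fun _ ⟨_, _, hX, hX1, hY, hY1, hr⟩ =>
      hr ▸ (dfun_projAct_mem_Icc hpos hker hX hX1 hY hY1).2⟩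
  have hp := inv_pos.mpr (hP.re_trace_pos hP0)
  have hq := inv_pos.mpr (hQ.re_trace_pos hQ0)
  have hX1 := hP.trace_inv_re_trace_smul hP0
  have hY1 := hQ.trace_inv_re_trace_smul hQ0
  have hX := hP.smul hp.le
  have hY := hQ.smul hq.le
  have hmem := le_csSup hbdd ⟨_, _, hX, hX1, hY, hY1, rfl⟩
  rwa [dfun_projAct (hpos _ hX) (map_ne_zero_of_trace_eq_one hker hX hX1) (hpos _ hY)
    (map_ne_zero_of_trace_eq_one hker hY hY1), LinearMap.map_smul_of_tower,
    LinearMap.map_smul_of_tower, dfun_smul_smul hp hq] at hmem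

theorem exists_mfun_mul_mfun_adjoint_le (hadj : IsHilbertSchmidtAdjoint φ ψ)
    (hψ : ∀ M : Matrix (Fin D) (Fin D) ℂ, M.PosSemidef → (ψ M).PosSemidef)
    {X Y : Matrix (Fin D) (Fin D) ℂ} (hX : X.PosSemidef) (hY : Y.PosSemidef)
    (hA : (φ X).PosSemidef) (hA0 : φ X ≠ 0) (hB : (φ Y).PosSemidef) (hB0 : φ Y ≠ 0)
    {ε : ℝ} (hε : 0 < ε) :
    ∃ P Q : Matrix (Fin D) (Fin D) ℂ, P.PosSemidef ∧ P ≠ 0 ∧ Q.PosSemidef ∧ Q ≠ 0 ∧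
      mfun (ψ P) (ψ Q) * mfun (ψ Q) (ψ P) ≤
        (mfun (φ X) (φ Y) + ε) * (mfun (φ Y) (φ X) + ε) := by
  obtain ⟨v, hb, hab⟩ := exists_dotProduct_mulVec_lt_mfun_add hA hB hB0 hε
  obtain ⟨w, ha', hba'⟩ := exists_dotProduct_mulVec_lt_mfun_add hB hA hA0 hε
  have htr := hadj.trace_mul_map_vecMulVec hψ
  have hP := posSemidef_vecMulVec_self_star v
  have hQ := posSemidef_vecMulVec_self_star w
  have hψP0 : ψ (vecMulVec v (star v)) ≠ 0 := fun h => hb.ne' (by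
    rw [← htr Y v, h, Matrix.mul_zero, trace_zero, Complex.zero_re])
  have hψQ0 : ψ (vecMulVec w (star w)) ≠ 0 := fun h => ha'.ne' (by
    rw [← htr X w, h, Matrix.mul_zero, trace_zero, Complex.zero_re])
  have hPQ := mfun_le_div (hψ _ hP) hX (B := ψ (vecMulVec w (star w))) (by rwa [htr])
  have hQP := mfun_le_div (hψ _ hQ) hY (B := ψ (vecMulVec v (star v))) (by rwa [htr])
  rw [htr, htr] at hPQ hQP
  refine ⟨_, _, hP, fun h => hψP0 (by rw [h, map_zero]), hQ,
    fun h => hψQ0 (by rw [h, map_zero]), ?_⟩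
  have ha := (Complex.nonneg_iff.mp (hA.dotProduct_mulVec_nonneg v)).1
  have hb' := (Complex.nonneg_iff.mp (hB.dotProduct_mulVec_nonneg w)).1
  calc _ ≤ (star v ⬝ᵥ φ X *ᵥ v).re / (star w ⬝ᵥ φ X *ᵥ w).re *
        ((star w ⬝ᵥ φ Y *ᵥ w).re / (star v ⬝ᵥ φ Y *ᵥ v).re) :=
        mul_le_mul hPQ hQP (mfun_nonneg_s17 (hψ _ hQ) (hψ _ hP) hψP0) (div_nonneg ha ha'.le)
    _ ≤ _ := by
        rw [div_mul_div_comm, div_le_iff₀ (mul_pos ha' hb)]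
        nlinarith [mul_lt_mul'' hab hba' ha hb']

open Filter Topology in
theorem dfun_map_le_contr_of_isHilbertSchmidtAdjoint (hadj : IsHilbertSchmidtAdjoint φ ψ)
    (hpos : ∀ M : Matrix (Fin D) (Fin D) ℂ, M.PosSemidef → (φ M).PosSemidef)
    (hker : ∀ M : Matrix (Fin D) (Fin D) ℂ, M.PosSemidef → φ M = 0 → M = 0)
    (hkerψ : ∀ M : Matrix (Fin D) (Fin D) ℂ, M.PosSemidef → ψ M = 0 → M = 0)
    {X Y : Matrix (Fin D) (Fin D) ℂ} (hX : X.PosSemidef) (hX1 : X.trace = 1)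
    (hY : Y.PosSemidef) (hY1 : Y.trace = 1) : dfun (φ X) (φ Y) ≤ contr ψ := by
  have hψ := hadj.posSemidef_map hpos
  have hA0 := map_ne_zero_of_trace_eq_one hker hX hX1
  have hB0 := map_ne_zero_of_trace_eq_one hker hY hY1
  set m := mfun (φ X) (φ Y)
  set m' := mfun (φ Y) (φ X)
  have hm : 0 ≤ m := mfun_nonneg_s17 (hpos X hX) (hpos Y hY) hB0
  have hm' : 0 ≤ m' := mfun_nonneg_s17 (hpos Y hY) (hpos X hX) hA0
  have hbound (ε : ℝ) (hε : 0 < ε) :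
      (1 - (m + ε) * (m' + ε)) / (1 + (m + ε) * (m' + ε)) ≤ contr ψ := by
    obtain ⟨P, Q, hP, hP0, hQ, hQ0, hPQ⟩ :=
      exists_mfun_mul_mfun_adjoint_le hadj hψ hX hY (hpos X hX) hA0 (hpos Y hY) hB0 hε
    have hψP0 : ψ P ≠ 0 := fun h => hP0 (hkerψ P hP h)
    have hψQ0 : ψ Q ≠ 0 := fun h => hQ0 (hkerψ Q hQ h)
    calc _ ≤ dfun (ψ P) (ψ Q) := one_sub_div_one_add_le
            (mul_nonneg (mfun_nonneg_s17 (hψ P hP) (hψ Q hQ) hψQ0)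
              (mfun_nonneg_s17 (hψ Q hQ) (hψ P hP) hψP0)) hPQ
      _ ≤ contr ψ := dfun_le_contr hψ hkerψ hP hP0 hQ hQ0
  have hcont : ContinuousAt
      (fun ε : ℝ => (1 - (m + ε) * (m' + ε)) / (1 + (m + ε) * (m' + ε))) 0 :=
    ContinuousAt.div (by fun_prop) (by fun_prop) (by positivity)
  have hlim : Tendsto (fun ε => (1 - (m + ε) * (m' + ε)) / (1 + (m + ε) * (m' + ε)))
      (𝓝[>] 0) (𝓝 (dfun (φ X) (φ Y))) := by
    simpa [dfun] using hcont.tendsto.mono_left nhdsWithin_le_nhds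
  exact le_of_tendsto hlim (eventually_nhdsWithin_of_forall hbound)

theorem contr_le_contr_of_isHilbertSchmidtAdjoint (hadj : IsHilbertSchmidtAdjoint φ ψ)
    (hpos : ∀ M : Matrix (Fin D) (Fin D) ℂ, M.PosSemidef → (φ M).PosSemidef)
    (hker : ∀ M : Matrix (Fin D) (Fin D) ℂ, M.PosSemidef → φ M = 0 → M = 0)
    (hkerψ : ∀ M : Matrix (Fin D) (Fin D) ℂ, M.PosSemidef → ψ M = 0 → M = 0) :
    contr φ ≤ contr ψ := by
  refine Real.sSup_le (fun _ ⟨X, Y, hX, hX1, hY, hY1, hr⟩ => ?_)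
    (contr_nonneg (hadj.posSemidef_map hpos) hkerψ)
  rw [hr, dfun_projAct (hpos X hX) (map_ne_zero_of_trace_eq_one hker hX hX1) (hpos Y hY)
    (map_ne_zero_of_trace_eq_one hker hY hY1)]
  exact dfun_map_le_contr_of_isHilbertSchmidtAdjoint hadj hpos hker hkerψ hX hX1 hY hY1

end Contraction

theorem stmt17 {D : ℕ}
    (φ φs : Matrix (Fin D) (Fin D) ℂ →ₗ[ℂ] Matrix (Fin D) (Fin D) ℂ)
    (hadj : ∀ A B : Matrix (Fin D) (Fin D) ℂ, (Aᴴ * φ B).trace = ((φs A)ᴴ * B).trace)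
    (hpos : ∀ M : Matrix (Fin D) (Fin D) ℂ, M.PosSemidef → (φ M).PosSemidef)
    (hker : ∀ M : Matrix (Fin D) (Fin D) ℂ, M.PosSemidef → φ M = 0 → M = 0)
    (hkers : ∀ M : Matrix (Fin D) (Fin D) ℂ, M.PosSemidef → φs M = 0 → M = 0) :
    contr φ = contr φs := by
  have hHS : IsHilbertSchmidtAdjoint φ φs := hadj
  exact le_antisymm (contr_le_contr_of_isHilbertSchmidtAdjoint hHS hpos hker hkers)
    (contr_le_contr_of_isHilbertSchmidtAdjoint hHS.symm (hHS.posSemidef_map hpos) hkers hker)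
end
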